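/- Drach's claimed integral is wrong: for H₁ = p_x p_y + αy^{-3/2} + βxy^{-3/2} + γx with (α,β,γ) not all satisfying degenerate conditions (e.g., β ≠ 0), the cubic function K₃ = 6(-y)(∂H₁/∂x · p_y - p_x · ∂H₁/∂y) - 3p_x²p_y does NOT Poisson-commute with H₁: {H₁, K₃} ≠ 0 as a function on the domain y > 0. -/

import Mathlib

noncomputable def pb (F G : ℝ → ℝ → ℝ → ℝ → ℝ) (x y px py : ℝ) : ℝ :=
  deriv (fun t => F x y t py) px * deriv (fun t => G t y px py) x
  - deriv (fun t => F t y px py) x * deriv (fun t => G x y t py) px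
  + deriv (fun t => F x y px t) py * deriv (fun t => G x t px py) y
  - deriv (fun t => F x t px py) y * deriv (fun t => G x y px t) py

noncomputable def H₁dr (α β γ : ℝ) : ℝ → ℝ → ℝ → ℝ → ℝ :=
  fun x y px py => px*py + α / (y * Real.sqrt y) + β*x / (y * Real.sqrt y) + γ*x

noncomputable def K₃dr (α β γ : ℝ) : ℝ → ℝ → ℝ → ℝ → ℝ :=
  fun x y px py =>
    6*(-y) * ((β / (y * Real.sqrt y) + γ) * py
      - px * (-(3/2) * (α + β*x) / (y^2 * Real.sqrt y)))
    - 3*px^2*py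

/-!
All terms of `{H₁, K₃}` cancel except one: on `y > 0` the bracket equals
`9 (α + β x) p_x² / y^(5/2)`. When `β ≠ 0` the factor `α + β x` vanishes only on one line,
so the bracket is `9` at `x = (1 - α) / β`, `y = p_x = 1`, `p_y = 0`.
-/

open Real

theorem pb_eq_of_hasDerivAt {F G : ℝ → ℝ → ℝ → ℝ → ℝ} {x y px py Fx Fy Fpx Fpy Gx Gy Gpx Gpy : ℝ}
    (hFx : HasDerivAt (fun t => F t y px py) Fx x) (hFy : HasDerivAt (fun t => F x t px py) Fy y)
    (hFpx : HasDerivAt (fun t => F x y t py) Fpx px)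
    (hFpy : HasDerivAt (fun t => F x y px t) Fpy py)
    (hGx : HasDerivAt (fun t => G t y px py) Gx x) (hGy : HasDerivAt (fun t => G x t px py) Gy y)
    (hGpx : HasDerivAt (fun t => G x y t py) Gpx px)
    (hGpy : HasDerivAt (fun t => G x y px t) Gpy py) :
    pb F G x y px py = Fpx * Gx - Fx * Gpx + Fpy * Gy - Fy * Gpy := by
  rw [pb, hFx.deriv, hFy.deriv, hFpx.deriv, hFpy.deriv, hGx.deriv, hGy.deriv, hGpx.deriv,
    hGpy.deriv]

theorem hasDerivAt_mul_sqrt {y : ℝ} (hy : 0 < y) :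
    HasDerivAt (fun t => t * √t) (3 / 2 * √y) y := by
  refine ((hasDerivAt_id' y).mul (hasDerivAt_sqrt hy.ne')).congr_deriv ?_
  field_simp
  rw [sq_sqrt hy.le]
  ring

theorem hasDerivAt_sq_mul_sqrt {y : ℝ} (hy : 0 < y) :
    HasDerivAt (fun t => t ^ 2 * √t) (5 / 2 * y * √y) y := by
  refine ((hasDerivAt_pow 2 y).mul (hasDerivAt_sqrt hy.ne')).congr_deriv ?_
  field_simp
  rw [sq_sqrt hy.le]
  ring

section Partials

variable (α β γ x y px py : ℝ)

theorem hasDerivAt_H₁dr_x :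
    HasDerivAt (fun t => H₁dr α β γ t y px py) (β / (y * √y) + γ) x := by
  refine ((((hasDerivAt_id' x).const_mul β).div_const (y * √y)).const_add
    (px * py + α / (y * √y))).add ((hasDerivAt_id' x).const_mul γ) |>.congr_deriv ?_
  ring

theorem hasDerivAt_H₁dr_px : HasDerivAt (fun t => H₁dr α β γ x y t py) py px := by
  refine ((((hasDerivAt_id' px).mul_const py).add_const _).add_const _).add_const _
    |>.congr_deriv ?_
  ring

theorem hasDerivAt_H₁dr_py : HasDerivAt (fun t => H₁dr α β γ x y px t) px py := by
  refine ((((hasDerivAt_id' py).const_mul px).add_const _).add_const _).add_const _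
    |>.congr_deriv ?_
  ring

theorem hasDerivAt_K₃dr_py :
    HasDerivAt (fun t => K₃dr α β γ x y px t) (-6 * y * (β / (y * √y) + γ) - 3 * px ^ 2) py := by
  refine (((hasDerivAt_id' py).const_mul (β / (y * √y) + γ)).sub_const _).const_mul (6 * -y)
    |>.sub ((hasDerivAt_id' py).const_mul (3 * px ^ 2)) |>.congr_deriv ?_
  ring

variable {y}

theorem hasDerivAt_K₃dr_x (hy : 0 < y) :
    HasDerivAt (fun t => K₃dr α β γ t y px py) (-9 * β * px / (y * √y)) x := by
  refine ((((hasDerivAt_id' x).const_mul β).const_add α).const_mul (-(3 / 2))).div_const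
    (y ^ 2 * √y) |>.const_mul px |>.const_sub ((β / (y * √y) + γ) * py) |>.const_mul (6 * -y)
    |>.sub_const (3 * px ^ 2 * py) |>.congr_deriv ?_
  have hs : 0 < √y := sqrt_pos.2 hy
  field_simp
  ring

theorem hasDerivAt_K₃dr_px (hy : 0 < y) :
    HasDerivAt (fun t => K₃dr α β γ x y t py) (-9 * (α + β * x) / (y * √y) - 6 * px * py) px := by
  refine (((hasDerivAt_id' px).mul_const (-(3 / 2) * (α + β * x) / (y ^ 2 * √y))).const_sub
    ((β / (y * √y) + γ) * py)).const_mul (6 * -y)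
    |>.sub (((hasDerivAt_pow 2 px).const_mul 3).mul_const py) |>.congr_deriv ?_
  have hs : 0 < √y := sqrt_pos.2 hy
  field_simp
  ring

theorem hasDerivAt_H₁dr_y (hy : 0 < y) :
    HasDerivAt (fun t => H₁dr α β γ x t px py) (-(3 / 2) * (α + β * x) / (y ^ 2 * √y)) y := by
  have hs : 0 < √y := sqrt_pos.2 hy
  have hys : y * √y ≠ 0 := by positivity
  have d := hasDerivAt_mul_sqrt hy
  refine (((hasDerivAt_const y α).fun_div d hys).const_add (px * py)).add
    ((hasDerivAt_const y (β * x)).fun_div d hys) |>.add_const (γ * x) |>.congr_deriv ?_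
  field_simp
  ring

theorem hasDerivAt_K₃dr_y (hy : 0 < y) :
    HasDerivAt (fun t => K₃dr α β γ x t px py)
      (3 * β * py / (y * √y) - 6 * γ * py + 27 / 2 * (α + β * x) * px / (y ^ 2 * √y)) y := by
  have hs : 0 < √y := sqrt_pos.2 hy
  have hys : y * √y ≠ 0 := by positivity
  have hy2s : y ^ 2 * √y ≠ 0 := by positivity
  have dH :=
    (((hasDerivAt_const y β).fun_div (hasDerivAt_mul_sqrt hy) hys).add_const γ).mul_const py
  have dV := ((hasDerivAt_const y (-(3 / 2) * (α + β * x))).fun_div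
    (hasDerivAt_sq_mul_sqrt hy) hy2s).const_mul px
  refine (((hasDerivAt_id' y).fun_neg.const_mul 6).fun_mul (dH.fun_sub dV)).sub_const
    (3 * px ^ 2 * py) |>.congr_deriv ?_
  field_simp
  ring

end Partials

theorem pb_H₁dr_K₃dr (α β γ x px py : ℝ) {y : ℝ} (hy : 0 < y) :
    pb (H₁dr α β γ) (K₃dr α β γ) x y px py = 9 * (α + β * x) * px ^ 2 / (y ^ 2 * √y) := by
  rw [pb_eq_of_hasDerivAt (hasDerivAt_H₁dr_x ..) (hasDerivAt_H₁dr_y α β γ x px py hy)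
    (hasDerivAt_H₁dr_px ..) (hasDerivAt_H₁dr_py ..) (hasDerivAt_K₃dr_x α β γ x px py hy)
    (hasDerivAt_K₃dr_y α β γ x px py hy) (hasDerivAt_K₃dr_px α β γ x px py hy)
    (hasDerivAt_K₃dr_py ..)]
  obtain ⟨s, hs, rfl⟩ : ∃ s, 0 < s ∧ y = s ^ 2 :=
    ⟨√y, sqrt_pos.2 hy, (sq_sqrt hy.le).symm⟩
  rw [sqrt_sq hs.le]
  field_simp
  ring

theorem stmt12 (α β γ : ℝ) (hβ : β ≠ 0) :
    ¬ (∀ x y px py : ℝ, 0 < y →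
        pb (H₁dr α β γ) (K₃dr α β γ) x y px py = 0) := by
  intro h
  have hx : α + β * ((1 - α) / β) = 1 := by field_simp; ring
  have h9 := h ((1 - α) / β) 1 1 0 one_pos
  rw [pb_H₁dr_K₃dr α β γ _ 1 0 one_pos, hx] at h9
  norm_num at h9
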